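/- For every infinite Hausdorff topological space X, USC*_p(X) does not satisfy the selection principle S₁(𝒫, 𝒮): there exists a sequence ⟨Sₙ : n ∈ ω⟩ of pointwise dense subsets of USC*_p(X) such that no choice of fₙ ∈ Sₙ makes {fₙ : n ∈ ω} sequentially dense in USC*_p(X). -/

import Mathlib

open Set Filter Topology

namespace Selectors

variable {X : Type*}

/-- Kinds of covers / of pointwise properties: `o` (ordinary covers / 𝒪),
`omega` (ω-covers / Ω), `gamma` (γ-covers / Γ). -/
inductive CoverKind : Type
  | o | omega | gamma

/-- `f` is a bounded upper semicontinuous real function on `X`. -/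
def IsUSCb [TopologicalSpace X] (f : X → ℝ) : Prop :=
  (∀ a : ℝ, IsOpen {x | f x < a}) ∧ ∃ M : ℝ, ∀ x, |f x| ≤ M

/-- `USC*_p(X)`: the set of bounded upper semicontinuous real functions on `X`,
regarded as a subset of `X → ℝ` with the product (pointwise convergence) topology. -/
def USCb (X : Type*) [TopologicalSpace X] : Set (X → ℝ) := {f | IsUSCb f}

/-- `C*_p(X)`: the set of bounded continuous real functions on `X`. -/
def Cb (X : Type*) [TopologicalSpace X] : Set (X → ℝ) :=
  {f | Continuous f ∧ ∃ M : ℝ, ∀ x, |f x| ≤ M}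

/-- `𝒰` is a cover of `X`. -/
def IsCover (𝒰 : Set (Set X)) : Prop := ∀ x : X, ∃ U ∈ 𝒰, x ∈ U

/-- The (not necessarily open) cover condition of the given kind:
an `o`-cover is a cover; an ω-cover is a cover not containing `X` such that every
finite subset of `X` is contained in a member; a γ-cover is an infinite cover such
that each point belongs to all but finitely many members. -/
def kindSets (k : CoverKind) (𝒰 : Set (Set X)) : Prop :=
  match k with
  | .o => IsCover 𝒰
  | .omega => IsCover 𝒰 ∧ Set.univ ∉ 𝒰 ∧ ∀ F : Set X, F.Finite → ∃ U ∈ 𝒰, F ⊆ U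
  | .gamma => IsCover 𝒰 ∧ 𝒰.Infinite ∧ ∀ x : X, {U ∈ 𝒰 | x ∉ U}.Finite

/-- The family `𝒪(X)`, `Ω(X)` or `Γ(X)` of open covers/ω-covers/γ-covers of `X`. -/
def OpenKindCovers (X : Type*) [TopologicalSpace X] (k : CoverKind) : Set (Set (Set X)) :=
  {𝒰 | (∀ U ∈ 𝒰, IsOpen U) ∧ kindSets k 𝒰}

/-- The selection principle `S₁(A, B)`. -/
def S1 {α : Type*} (A B : Set (Set α)) : Prop :=
  ∀ u : ℕ → Set α, (∀ n, u n ∈ A) →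
    ∃ sel : ℕ → α, (∀ n, sel n ∈ u n) ∧ Set.range sel ∈ B

/-- The selection principle `S_fin(A, B)`. -/
def Sfin {α : Type*} (A B : Set (Set α)) : Prop :=
  ∀ u : ℕ → Set α, (∀ n, u n ∈ A) →
    ∃ V : ℕ → Set α, (∀ n, V n ⊆ u n ∧ (V n).Finite) ∧ (⋃ n, V n) ∈ B

/-- Property `(𝒪_h)` of a family `F` of real functions. -/
def PropO (h : X → ℝ) (F : Set (X → ℝ)) : Prop :=
  ∀ x : X, h x ∈ closure ((fun f : X → ℝ => f x) '' F)

/-- Property `(Ω_h)`: `h ∉ F` and `h` belongs to the closure of `F` in `ℝ^X`. -/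
def PropOmega (h : X → ℝ) (F : Set (X → ℝ)) : Prop :=
  h ∉ F ∧ h ∈ closure F

/-- Property `(Γ_h)`. -/
def PropGamma (h : X → ℝ) (F : Set (X → ℝ)) : Prop :=
  F.Infinite ∧ ∀ ε : ℝ, 0 < ε → ∀ x : X, {f ∈ F | ε ≤ |f x - h x|}.Finite

/-- Property `(Φ_h)` for `Φ = 𝒪, Ω, Γ`. -/
def kindProp (k : CoverKind) (h : X → ℝ) (F : Set (X → ℝ)) : Prop :=
  match k with
  | .o => PropO h F
  | .omega => PropOmega h F
  | .gamma => PropGamma h F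

/-- The family `Φ_h(H) = {F ⊆ H : F has (Φ_h) and ∀ f ∈ F, f ≥ h ∧ f - h ∈ H}`. -/
def PhiH (k : CoverKind) (h : X → ℝ) (H : Set (X → ℝ)) : Set (Set (X → ℝ)) :=
  {F | F ⊆ H ∧ kindProp k h F ∧ ∀ f ∈ F, h ≤ f ∧ f - h ∈ H}

/-- `F ⊆ H` is sequentially dense in `H` (with respect to pointwise convergence). -/
def SeqDenseIn (F H : Set (X → ℝ)) : Prop :=
  F ⊆ H ∧ ∀ f ∈ H, ∃ u : ℕ → (X → ℝ), (∀ n, u n ∈ F) ∧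
    Filter.Tendsto u Filter.atTop (nhds f)

/-- `F ⊆ H` is dense in `H`. -/
def DenseIn (F H : Set (X → ℝ)) : Prop :=
  F ⊆ H ∧ H ⊆ closure F

/-- `F` is pointwise dense: `{f x : f ∈ F}` is dense in `ℝ` for every `x`. -/
def PointwiseDense (F : Set (X → ℝ)) : Prop :=
  ∀ x : X, Dense {y : ℝ | ∃ f ∈ F, f x = y}

/-- `F ⊆ H` is upper sequentially dense in `H`. -/
def UpperSeqDenseIn (F H : Set (X → ℝ)) : Prop :=
  F ⊆ H ∧ ∀ f ∈ H, ∃ u : ℕ → (X → ℝ),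
    (∀ n, u n ∈ F ∧ f ≤ u n ∧ u n - f ∈ H) ∧
    Filter.Tendsto u Filter.atTop (nhds f)

/-- `F ⊆ H` is upper dense in `H`: for every `f ∈ H` the set
`{h ∈ F : h ≥ f ∧ h - f ∈ H}` is dense in `{h ∈ H : h ≥ f}`. -/
def UpperDenseIn (F H : Set (X → ℝ)) : Prop :=
  F ⊆ H ∧ ∀ f ∈ H, {g | g ∈ H ∧ f ≤ g} ⊆ closure {g | g ∈ F ∧ f ≤ g ∧ g - f ∈ H}

/-- `𝒮(H)`: the family of sequentially dense subsets of `H`. -/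
def Sfam (H : Set (X → ℝ)) : Set (Set (X → ℝ)) := {F | SeqDenseIn F H}

/-- `𝒟(H)`: the family of dense subsets of `H`. -/
def Dfam (H : Set (X → ℝ)) : Set (Set (X → ℝ)) := {F | DenseIn F H}

/-- `𝒫(H)`: the family of pointwise dense subsets of `H`. -/
def Pfam (H : Set (X → ℝ)) : Set (Set (X → ℝ)) := {F | F ⊆ H ∧ PointwiseDense F}

/-- `Φ̃↑(H)`: for `Φ = Γ` the upper sequentially dense subsets, for `Φ = Ω`
the upper dense subsets, for `Φ = 𝒪` the pointwise dense subsets of `H`. -/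
def upTilde (k : CoverKind) (H : Set (X → ℝ)) : Set (Set (X → ℝ)) :=
  match k with
  | .o => Pfam H
  | .omega => {F | UpperDenseIn F H}
  | .gamma => {F | UpperSeqDenseIn F H}

/-- `H` is separable: it has a countable dense subset. -/
def SeparableSet (H : Set (X → ℝ)) : Prop := ∃ D, D.Countable ∧ DenseIn D H

/-- `H` is sequentially separable: it has a countable sequentially dense subset. -/
def SeqSeparableSet (H : Set (X → ℝ)) : Prop := ∃ D, D.Countable ∧ SeqDenseIn D H

/-- Property `(ε)`: every open ω-cover contains a countable ω-subcover. -/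
def PropEps (X : Type*) [TopologicalSpace X] : Prop :=
  ∀ 𝒰 : Set (Set X), 𝒰 ∈ OpenKindCovers X CoverKind.omega →
    ∃ 𝒱 ⊆ 𝒰, 𝒱.Countable ∧ 𝒱 ∈ OpenKindCovers X CoverKind.omega

/-- `S` is an `F_σ` set with respect to the topology `t`. -/
def IsFsigmaIn (t : TopologicalSpace X) (S : Set X) : Prop :=
  ∃ C : ℕ → Set X, (∀ n, IsClosed[t] (C n)) ∧ S = ⋃ n, C n

/-- `S` is locally closed with respect to `t`: an intersection of a `t`-open
and a `t`-closed set. -/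
def IsLocallyClosedIn (t : TopologicalSpace X) (S : Set X) : Prop :=
  ∃ U F : Set X, IsOpen[t] U ∧ IsClosed[t] F ∧ S = U ∩ F

/-- `S` is a cozero set with respect to `t`. -/
def IsCozeroIn (t : TopologicalSpace X) (S : Set X) : Prop :=
  ∃ f : X → ℝ, @Continuous X ℝ t inferInstance f ∧ S = {x | f x ≠ 0}

/-- The `OB`-property of `⟨X, t⟩`: there is a separable metrizable topology `t'`
on `X` weaker than `t` such that every locally closed subset of `⟨X, t⟩` is an
`F_σ`-set in `t'`. -/
def OBProperty (X : Type*) [t : TopologicalSpace X] : Prop :=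
  ∃ t' : TopologicalSpace X,
    (∀ s : Set X, IsOpen[t'] s → IsOpen[t] s) ∧
    @TopologicalSpace.MetrizableSpace X t' ∧
    @TopologicalSpace.SeparableSpace X t' ∧
    ∀ S : Set X, IsLocallyClosedIn t S → IsFsigmaIn t' S

/-- The `V`-property of `⟨X, t⟩`: there is a separable metrizable topology `t'`
on `X` weaker than `t` such that every cozero subset of `⟨X, t⟩` is an
`F_σ`-set in `t'`. -/
def VProperty (X : Type*) [t : TopologicalSpace X] : Prop :=
  ∃ t' : TopologicalSpace X,
    (∀ s : Set X, IsOpen[t'] s → IsOpen[t] s) ∧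
    @TopologicalSpace.MetrizableSpace X t' ∧
    @TopologicalSpace.SeparableSpace X t' ∧
    ∀ S : Set X, IsCozeroIn t S → IsFsigmaIn t' S

/-- `iw(X) = ℵ₀`: `X` can be mapped by a one-to-one continuous map onto a
Tychonoff space of countable weight. -/
def IWCountable (X : Type*) [TopologicalSpace X] : Prop :=
  ∃ (Y : Type) (tY : TopologicalSpace Y) (f : X → Y),
    @Continuous X Y _ tY f ∧ Function.Bijective f ∧
    @T35Space Y tY ∧ @SecondCountableTopology Y tY

/-- `Φ^sh(X)`: the family of open shrinkable φ-covers of `X`. -/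
def ShFam (X : Type*) [TopologicalSpace X] (k : CoverKind) : Set (Set (Set X)) :=
  {𝒰 | 𝒰 ∈ OpenKindCovers X k ∧
    ∃ 𝒲 ∈ OpenKindCovers X k, ∀ W ∈ 𝒲, ∃ U ∈ 𝒰, closure W ⊆ U}

/-- A zero set. -/
def IsZeroSet [TopologicalSpace X] (S : Set X) : Prop :=
  ∃ f : X → ℝ, Continuous f ∧ S = {x | f x = 0}

/-- A cozero set. -/
def IsCozeroSet [TopologicalSpace X] (S : Set X) : Prop :=
  ∃ f : X → ℝ, Continuous f ∧ S = {x | f x ≠ 0}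

/-- `Φ^fsh_cz(X)`: the family of functionally shrinkable φ-covers of `X`
consisting of cozero sets. -/
def FshCzFam (X : Type*) [TopologicalSpace X] (k : CoverKind) : Set (Set (Set X)) :=
  {𝒰 | (∀ U ∈ 𝒰, IsCozeroSet U) ∧ kindSets k 𝒰 ∧
    ∃ 𝒲 : Set (Set X), (∀ W ∈ 𝒲, IsZeroSet W) ∧ kindSets k 𝒲 ∧
      ∀ W ∈ 𝒲, ∃ U ∈ 𝒰, closure W ⊆ U}

/-- The function `f_{U,g}`: equal to `0` on `U` and to `1 + sup |g|` off `U`. -/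
noncomputable def fU (U : Set X) (g : X → ℝ) : X → ℝ :=
  Uᶜ.indicator fun _ => 1 + ⨆ y, |g y|

/-- The family `S(𝒰) = {f_{U,g} + g : U ∈ 𝒰, g ∈ USC*_p(X)}`. -/
def SU [TopologicalSpace X] (𝒰 : Set (Set X)) : Set (X → ℝ) :=
  {f | ∃ U ∈ 𝒰, ∃ g ∈ USCb X, f = fU U g + g}

/-- The Sorgenfrey topology on `ℝ`, generated by the half-open intervals `[a, b)`. -/
def sorgenfreyTop : TopologicalSpace ℝ :=
  TopologicalSpace.generateFrom {s | ∃ a b : ℝ, s = Set.Ico a b}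

/-- The Sorgenfrey plane topology on `ℝ × ℝ`. -/
def sorgenfreyPlaneTop : TopologicalSpace (ℝ × ℝ) :=
  @instTopologicalSpaceProd ℝ ℝ sorgenfreyTop sorgenfreyTop


/-!
A single pointwise dense set already defeats `S₁(𝒫, 𝒮)`: for two distinct points `a`, `b`, the
bounded upper semicontinuous functions taking a value `≥ 1` at `a` or at `b` form a pointwise
dense family, since a function with an arbitrary value at `x` can be made to spike up at
whichever of `a`, `b` differs from `x` (a point spike is upper semicontinuous because points are
closed). This family lies in a closed subset of `ℝ^X` missing `0`, so no sequence from it,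
let alone from a selection out of it, converges to `0 ∈ USC*_p(X)`.
-/

lemma mem_USCb_of_upperSemicontinuous [TopologicalSpace X] {f : X → ℝ}
    (hf : UpperSemicontinuous f) (hbdd : ∃ M : ℝ, ∀ x, |f x| ≤ M) : f ∈ USCb X :=
  ⟨fun a => upperSemicontinuous_iff_isOpen_preimage.1 hf a, hbdd⟩

lemma const_mem_USCb [TopologicalSpace X] (c : ℝ) : (fun _ => c) ∈ USCb X :=
  mem_USCb_of_upperSemicontinuous upperSemicontinuous_const ⟨|c|, fun _ => le_rfl⟩

lemma const_add_indicator_mem_USCb [TopologicalSpace X] {s : Set X} (hs : IsClosed s)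
    (y : ℝ) {c : ℝ} (hc : 0 ≤ c) : (fun w => y + s.indicator (fun _ => c) w) ∈ USCb X := by
  refine mem_USCb_of_upperSemicontinuous
    (upperSemicontinuous_const.add (hs.upperSemicontinuous_indicator hc)) ⟨|y| + c, fun w => ?_⟩
  have hind : |s.indicator (fun _ => c) w| ≤ c := by
    by_cases hw : w ∈ s <;> simp [hw, abs_of_nonneg hc, hc]
  exact (abs_add_le _ _).trans (by gcongr)

lemma exists_mem_USCb_apply_eq_and_one_le_apply [TopologicalSpace X] [T1Space X] {x z : X}
    (hxz : x ≠ z) (y : ℝ) : ∃ f ∈ USCb X, f x = y ∧ 1 ≤ f z := by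
  refine ⟨fun w => y + ({z} : Set X).indicator (fun _ => 2 + |y|) w,
    const_add_indicator_mem_USCb isClosed_singleton y (by positivity), by simp [hxz], ?_⟩
  simp only [indicator_of_mem (mem_singleton z)]
  linarith [neg_abs_le y]

def USCbOneLeAt [TopologicalSpace X] (a b : X) : Set (X → ℝ) :=
  {f | f ∈ USCb X ∧ (1 ≤ f a ∨ 1 ≤ f b)}

lemma USCbOneLeAt_mem_Pfam [TopologicalSpace X] [T1Space X] {a b : X} (hab : a ≠ b) :
    USCbOneLeAt a b ∈ Pfam (USCb X) := by
  refine ⟨fun f hf => hf.1, fun x => ?_⟩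
  suffices ∀ y : ℝ, ∃ f ∈ USCbOneLeAt a b, f x = y by
    rw [eq_univ_of_forall this]
    exact dense_univ
  intro y
  by_cases hxa : x = a
  · obtain ⟨f, hf, hfx, hfb⟩ := exists_mem_USCb_apply_eq_and_one_le_apply (hxa ▸ hab) y
    exact ⟨f, ⟨hf, Or.inr hfb⟩, hfx⟩
  · obtain ⟨f, hf, hfx, hfa⟩ := exists_mem_USCb_apply_eq_and_one_le_apply hxa y
    exact ⟨f, ⟨hf, Or.inl hfa⟩, hfx⟩

lemma zero_notMem_closure_USCbOneLeAt [TopologicalSpace X] (a b : X) :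
    (0 : X → ℝ) ∉ closure (USCbOneLeAt a b) := by
  have hclosed : IsClosed {f : X → ℝ | 1 ≤ f a ∨ 1 ≤ f b} :=
    (isClosed_le continuous_const (continuous_apply a)).union
      (isClosed_le continuous_const (continuous_apply b))
  intro h0
  have := closure_minimal (fun f hf => hf.2) hclosed h0
  norm_num at this

lemma not_S1_Pfam_Sfam_of_notMem_closure {H F : Set (X → ℝ)} (hF : F ∈ Pfam H) {h : X → ℝ}
    (hH : h ∈ H) (hh : h ∉ closure F) : ¬ S1 (Pfam H) (Sfam H) := by
  intro hS1
  obtain ⟨sel, hsel, hdense⟩ := hS1 (fun _ => F) (fun _ => hF)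
  obtain ⟨u, hu, hlim⟩ := hdense.2 h hH
  refine hh (mem_closure_of_tendsto hlim (Eventually.of_forall fun n => ?_))
  obtain ⟨m, hm⟩ := hu n
  exact hm ▸ hsel m

/-- For every infinite Hausdorff space X, USC*_p(X) does not satisfy
S₁(𝒫, 𝒮). -/
theorem statement13 {X : Type*} [TopologicalSpace X] [T2Space X] [Infinite X] :
    ¬ S1 (Pfam (USCb X)) (Sfam (USCb X)) := by
  obtain ⟨a, b, hab⟩ := exists_pair_ne X
  exact not_S1_Pfam_Sfam_of_notMem_closure (USCbOneLeAt_mem_Pfam hab)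
    (const_mem_USCb (X := X) 0) (zero_notMem_closure_USCbOneLeAt a b)

end Selectors
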